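/- Let h>0, a∈ℝ, ν∈(0,1), and let y:(hℕ)_a→ℝ. Then for all t∈(hℕ)_{a+(1−ν)h}: 2·y(t+νh)·(_aΔ_h^ν y)(t) − (_aΔ_h^ν y²)(t) = (t−a)_h^{(−ν)}·y(t+νh)²/Γ(1−ν) + (hν/Γ(1−ν))·Σ_{s=a/h}^{t/h+ν−1}(t−σ(sh))_h^{(−ν−1)}·(y(t+νh)−y(sh))²; in particular this quantity is nonnegative. -/
import Mathlib


open Finset Filter Matrix

/-- The `h`-factorial function `t_h^(ν) = h^ν Γ(t/h+1)/Γ(t/h+1-ν)`. -/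
noncomputable def hfact (h t ν : ℝ) : ℝ :=
  h ^ ν * Real.Gamma (t / h + 1) / Real.Gamma (t / h + 1 - ν)

/-- The forward `h`-difference operator. -/
noncomputable def fdiff (h : ℝ) (y : ℝ → ℝ) (t : ℝ) : ℝ := (y (t + h) - y t) / h

/-- The fractional `h`-sum of order `μ > 0` of `y : (hℕ)_a → ℝ`, evaluated at the
grid point `t = a + μh + k·h` of `(hℕ)_{a+μh}`. -/
noncomputable def hSum (h a μ : ℝ) (y : ℝ → ℝ) (k : ℕ) : ℝ :=
  (h / Real.Gamma μ) *
    ∑ j ∈ Finset.range (k + 1),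
      hfact h (a + μ * h + (k : ℝ) * h - (a + (j : ℝ) * h + h)) (μ - 1) * y (a + (j : ℝ) * h)

/-- The Riemann–Liouville-like `h`-difference of order `ν ∈ (0,1]` of `y : (hℕ)_a → ℝ`,
evaluated at the grid point `t = a + (1-ν)h + k·h` of `(hℕ)_{a+(1-ν)h}`:
for `ν ∈ (0,1)` it is `Δ_h` applied to the `(1-ν)`-fractional `h`-sum. -/
noncomputable def rlD (h a ν : ℝ) (y : ℝ → ℝ) (k : ℕ) : ℝ :=
  if ν = 1 then fdiff h y (a + (k : ℝ) * h)
  else (hSum h a (1 - ν) y (k + 1) - hSum h a (1 - ν) y k) / h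

noncomputable def gg (ν x : ℝ) : ℝ := Real.Gamma x / Real.Gamma (x + ν)

lemma hfact_ch (h c ν : ℝ) (hh : h ≠ 0) :
    hfact h (c * h) ν = h ^ ν * Real.Gamma (c + 1) / Real.Gamma (c + 1 - ν) := by
  unfold hfact
  rw [mul_div_cancel_right₀ _ hh]

lemma hSum_eq (h a ν : ℝ) (hh : 0 < h) (y : ℝ → ℝ) (K : ℕ) :
    hSum h a (1-ν) y K = (h ^ (1-ν) / Real.Gamma (1-ν)) *
      ∑ j ∈ Finset.range (K+1), gg ν ((K:ℝ) - (j:ℝ) + (1-ν)) * y (a + (j:ℝ)*h) := by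
  unfold hSum
  rw [Finset.mul_sum, Finset.mul_sum]
  refine Finset.sum_congr rfl fun j _ => ?_
  rw [show a + (1-ν)*h + (K:ℝ)*h - (a + (j:ℝ)*h + h) = ((K:ℝ) - (j:ℝ) - ν) * h by ring,
    hfact_ch _ _ _ hh.ne']
  rw [show (K:ℝ) - (j:ℝ) - ν + 1 = (K:ℝ) - (j:ℝ) + (1-ν) by ring,
    show (K:ℝ) - (j:ℝ) + (1-ν) - (1-ν-1) = ((K:ℝ) - (j:ℝ) + (1-ν)) + ν by ring]
  have hpow : h ^ ((1:ℝ)-ν) = h ^ (-ν) * h := by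
    rw [show (1:ℝ)-ν = -ν+1 by ring, Real.rpow_add_one hh.ne']
  rw [hpow]
  unfold gg
  ring

lemma gg_mu (ν : ℝ) (hν1 : ν < 1) : gg ν (1-ν) = Real.Gamma (1-ν) := by
  unfold gg
  rw [show 1-ν+ν = (1:ℝ) by ring, Real.Gamma_one, div_one]

lemma rlD_eq (h a ν : ℝ) (hh : 0 < h) (hν0 : 0 < ν) (hν1 : ν < 1) (y : ℝ → ℝ) (k : ℕ) :
    rlD h a ν y k = (h ^ (-ν) / Real.Gamma (1-ν)) *
      (Real.Gamma (1-ν) * y (a + ((k:ℝ)+1)*h) +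
       ∑ j ∈ Finset.range (k+1),
         (gg ν ((k:ℝ) - (j:ℝ) + 1 + (1-ν)) - gg ν ((k:ℝ) - (j:ℝ) + (1-ν))) * y (a + (j:ℝ)*h)) := by
  unfold rlD
  rw [if_neg hν1.ne, hSum_eq h a ν hh y (k+1), hSum_eq h a ν hh y k,
    Finset.sum_range_succ _ (k+1)]
  push_cast
  rw [show (k:ℝ) + 1 - ((k:ℝ)+1) + (1-ν) = 1-ν by ring, gg_mu ν hν1]
  have e1 : ∑ j ∈ Finset.range (k+1), gg ν ((k:ℝ) + 1 - (j:ℝ) + (1-ν)) * y (a + (j:ℝ)*h)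
      - ∑ j ∈ Finset.range (k+1), gg ν ((k:ℝ) - (j:ℝ) + (1-ν)) * y (a + (j:ℝ)*h)
      = ∑ j ∈ Finset.range (k+1),
         (gg ν ((k:ℝ) - (j:ℝ) + 1 + (1-ν)) - gg ν ((k:ℝ) - (j:ℝ) + (1-ν))) * y (a + (j:ℝ)*h) := by
    rw [← Finset.sum_sub_distrib]
    refine Finset.sum_congr rfl fun j _ => ?_
    rw [show (k:ℝ) + 1 - (j:ℝ) + (1-ν) = (k:ℝ) - (j:ℝ) + 1 + (1-ν) by ring, sub_mul]
  have hG : Real.Gamma (1-ν) ≠ 0 := (Real.Gamma_pos_of_pos (by linarith)).ne'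
  have hpow : h ^ ((1:ℝ)-ν) = h ^ (-ν) * h := by
    rw [show (1:ℝ)-ν = -ν+1 by ring, Real.rpow_add_one hh.ne']
  rw [← e1, hpow]
  field_simp
  ring

lemma gg_diff (ν x : ℝ) (hx : 0 < x) (hxν : 0 < x + ν) :
    gg ν (x + 1) - gg ν x = -(ν * (Real.Gamma x / Real.Gamma (x + ν + 1))) := by
  unfold gg
  have h1 : Real.Gamma (x + 1) = x * Real.Gamma x := Real.Gamma_add_one hx.ne'
  have h2 : Real.Gamma (x + 1 + ν) = (x + ν) * Real.Gamma (x + ν) := by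
    rw [show x + 1 + ν = (x + ν) + 1 by ring, Real.Gamma_add_one hxν.ne']
  have h3 : Real.Gamma (x + ν + 1) = (x + ν) * Real.Gamma (x + ν) := Real.Gamma_add_one hxν.ne'
  have h4 : Real.Gamma (x + ν) ≠ 0 := (Real.Gamma_pos_of_pos hxν).ne'
  rw [h1, h2, h3]
  field_simp
  ring

lemma tele (ν : ℝ) : ∀ k : ℕ, ∑ j ∈ Finset.range (k+1),
      (gg ν ((k:ℝ) - (j:ℝ) + 1 + (1-ν)) - gg ν ((k:ℝ) - (j:ℝ) + (1-ν)))
    = gg ν ((k:ℝ) + 1 + (1-ν)) - gg ν (1-ν) := by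
  intro k
  induction k with
  | zero => norm_num
  | succ k ih =>
    rw [Finset.sum_range_succ']
    have e : ∀ j : ℕ, j ∈ Finset.range (k+1) →
        (gg ν ((((k:ℕ)+1:ℕ):ℝ) - (((j:ℕ)+1:ℕ):ℝ) + 1 + (1-ν)) - gg ν ((((k:ℕ)+1:ℕ):ℝ) - (((j:ℕ)+1:ℕ):ℝ) + (1-ν)))
        = (gg ν ((k:ℝ) - (j:ℝ) + 1 + (1-ν)) - gg ν ((k:ℝ) - (j:ℝ) + (1-ν))) := by
      intro j _
      norm_num
    rw [Finset.sum_congr rfl e, ih]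
    push_cast
    norm_num

theorem stmt7 (h a ν : ℝ) (hh : 0 < h) (hν0 : 0 < ν) (hν1 : ν < 1)
    (y : ℝ → ℝ) :
    ∀ k : ℕ,
      (2 * y (a + ((k : ℝ) + 1) * h) * rlD h a ν y k - rlD h a ν (fun t => y t ^ 2) k
          = hfact h (a + (1 - ν) * h + (k : ℝ) * h - a) (-ν) *
              (y (a + ((k : ℝ) + 1) * h)) ^ 2 / Real.Gamma (1 - ν)
            + (h * ν / Real.Gamma (1 - ν)) *
              ∑ j ∈ Finset.range (k + 1),
                hfact h (a + (1 - ν) * h + (k : ℝ) * h - (a + (j : ℝ) * h + h)) (-ν - 1) *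
                  (y (a + ((k : ℝ) + 1) * h) - y (a + (j : ℝ) * h)) ^ 2) ∧
      0 ≤ 2 * y (a + ((k : ℝ) + 1) * h) * rlD h a ν y k
          - rlD h a ν (fun t => y t ^ 2) k := by
  intro k
  have hG : (0:ℝ) < Real.Gamma (1-ν) := Real.Gamma_pos_of_pos (by linarith)
  set Y := y (a + ((k:ℝ)+1)*h) with hY
  -- rewrite the RHS hfact terms
  have hfact1 : hfact h (a + (1 - ν) * h + (k : ℝ) * h - a) (-ν)
      = h ^ (-ν) * gg ν ((k:ℝ) + 1 + (1-ν)) := by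
    rw [show a + (1 - ν) * h + (k : ℝ) * h - a = ((k:ℝ) + 1 - ν) * h by ring,
      hfact_ch _ _ _ hh.ne']
    unfold gg
    rw [show (k:ℝ) + 1 - ν + 1 = (k:ℝ) + 1 + (1-ν) by ring,
      show (k:ℝ) + 1 + (1-ν) - -ν = ((k:ℝ) + 1 + (1-ν)) + ν by ring, mul_div_assoc]
  have hfact2 : ∀ j : ℕ, j ∈ Finset.range (k+1) →
      hfact h (a + (1 - ν) * h + (k : ℝ) * h - (a + (j : ℝ) * h + h)) (-ν - 1) *
          (Y - y (a + (j : ℝ) * h)) ^ 2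
      = h ^ (-ν-1) * ((Real.Gamma ((k:ℝ) - (j:ℝ) + (1-ν)) /
          Real.Gamma (((k:ℝ) - (j:ℝ) + (1-ν)) + ν + 1)) * (Y - y (a + (j : ℝ) * h)) ^ 2) := by
    intro j _
    rw [show a + (1 - ν) * h + (k : ℝ) * h - (a + (j : ℝ) * h + h) = ((k:ℝ) - (j:ℝ) - ν) * h by ring,
      hfact_ch _ _ _ hh.ne',
      show (k:ℝ) - (j:ℝ) - ν + 1 = (k:ℝ) - (j:ℝ) + (1-ν) by ring,
      show (k:ℝ) - (j:ℝ) + (1-ν) - (-ν - 1) = ((k:ℝ) - (j:ℝ) + (1-ν)) + ν + 1 by ring]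
    ring
  have key : 2*Y*(∑ j ∈ Finset.range (k+1),
        (gg ν ((k:ℝ) - (j:ℝ) + 1 + (1-ν)) - gg ν ((k:ℝ) - (j:ℝ) + (1-ν))) * y (a + (j:ℝ)*h))
      - (∑ j ∈ Finset.range (k+1),
        (gg ν ((k:ℝ) - (j:ℝ) + 1 + (1-ν)) - gg ν ((k:ℝ) - (j:ℝ) + (1-ν))) * (y (a + (j:ℝ)*h))^2)
      - Y^2 * (∑ j ∈ Finset.range (k+1),
        (gg ν ((k:ℝ) - (j:ℝ) + 1 + (1-ν)) - gg ν ((k:ℝ) - (j:ℝ) + (1-ν))))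
      - ν * (∑ j ∈ Finset.range (k+1), (Real.Gamma ((k:ℝ) - (j:ℝ) + (1-ν)) /
          Real.Gamma (((k:ℝ) - (j:ℝ) + (1-ν)) + ν + 1)) * (Y - y (a + (j:ℝ)*h)) ^ 2) = 0 := by
    rw [Finset.mul_sum, Finset.mul_sum, Finset.mul_sum, ← Finset.sum_sub_distrib,
      ← Finset.sum_sub_distrib, ← Finset.sum_sub_distrib]
    refine Finset.sum_eq_zero fun j hj => ?_
    have hjk : (j:ℝ) ≤ (k:ℝ) := by
      have := Finset.mem_range.mp hj
      exact_mod_cast Nat.lt_succ_iff.mp this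
    have hx : (0:ℝ) < (k:ℝ) - (j:ℝ) + (1-ν) := by linarith
    have hxν : (0:ℝ) < ((k:ℝ) - (j:ℝ) + (1-ν)) + ν := by linarith
    have hd := gg_diff ν ((k:ℝ) - (j:ℝ) + (1-ν)) hx hxν
    rw [show (k:ℝ) - (j:ℝ) + (1-ν) + 1 = (k:ℝ) - (j:ℝ) + 1 + (1-ν) by ring] at hd
    rw [hd]
    ring
  have htele := tele ν k
  rw [gg_mu ν hν1] at htele
  have kpos : (0:ℝ) ≤ (k:ℝ) := Nat.cast_nonneg k
  have main : 2 * Y * rlD h a ν y k - rlD h a ν (fun t => y t ^ 2) k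
      = hfact h (a + (1 - ν) * h + (k : ℝ) * h - a) (-ν) * Y ^ 2 / Real.Gamma (1 - ν)
        + (h * ν / Real.Gamma (1 - ν)) * ∑ j ∈ Finset.range (k + 1),
            hfact h (a + (1 - ν) * h + (k : ℝ) * h - (a + (j : ℝ) * h + h)) (-ν - 1) *
              (Y - y (a + (j : ℝ) * h)) ^ 2 := by
    rw [rlD_eq h a ν hh hν0 hν1 y k, rlD_eq h a ν hh hν0 hν1 (fun t => y t^2) k,
      hfact1, Finset.sum_congr rfl hfact2, ← hY]
    rw [← Finset.mul_sum]
    have hpow : h ^ (-ν) = h * h ^ (-ν-1) := by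
      rw [show -ν = (-ν-1)+1 by ring, Real.rpow_add_one hh.ne']; ring
    linear_combination (h^(-ν)/Real.Gamma (1-ν)) * key
      + (h^(-ν)*Y^2/Real.Gamma (1-ν)) * htele
      + (ν * (∑ j ∈ Finset.range (k+1), (Real.Gamma ((k:ℝ) - (j:ℝ) + (1-ν)) /
          Real.Gamma (((k:ℝ) - (j:ℝ) + (1-ν)) + ν + 1)) * (Y - y (a + (j:ℝ)*h)) ^ 2)
          / Real.Gamma (1-ν)) * hpow
  refine ⟨main, ?_⟩
  rw [main]
  apply add_nonneg
  · refine div_nonneg (mul_nonneg ?_ (sq_nonneg _)) hG.le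
    rw [hfact1]
    have g1 : (0:ℝ) < Real.Gamma ((k:ℝ) + 1 + (1-ν)) := Real.Gamma_pos_of_pos (by linarith)
    have g2 : (0:ℝ) < Real.Gamma (((k:ℝ) + 1 + (1-ν)) + ν) := Real.Gamma_pos_of_pos (by linarith)
    exact mul_nonneg (Real.rpow_nonneg hh.le _) (div_nonneg g1.le g2.le)
  · refine mul_nonneg (by positivity) (Finset.sum_nonneg fun j hj => ?_)
    rw [hfact2 j hj]
    have hjk : (j:ℝ) ≤ (k:ℝ) := by
      exact_mod_cast Nat.lt_succ_iff.mp (Finset.mem_range.mp hj)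
    have g1 : (0:ℝ) < Real.Gamma ((k:ℝ) - (j:ℝ) + (1-ν)) := Real.Gamma_pos_of_pos (by linarith)
    have g2 : (0:ℝ) < Real.Gamma (((k:ℝ) - (j:ℝ) + (1-ν)) + ν + 1) := Real.Gamma_pos_of_pos (by linarith)
    exact mul_nonneg (Real.rpow_nonneg hh.le _)
      (mul_nonneg (div_nonneg g1.le g2.le) (sq_nonneg _))
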